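/- arXiv:2304.10094 — 2 statements merged into one kernel-verified Lean document; each statement's English description precedes it below -/
import Mathlib

section
/- Let P_{m,k} be a generalized Petersen graph (m ≥ 3, k ≥ 1) of order 2m and T a tree of order n; let d_p = diam(P_{m,k}), d_t = diam(T), ε = ε(T). If rn(P_{m,k} □ T) = (2mn − 1)(d_t + ε) − 4m·L(T), then there exists an ordering z_0, z_1, …, z_{2mn−1} of the vertices of P_{m,k} □ T, with z_t = (x_{i_t}, y_{j_t}), such that: (a) d_{P_{m,k}}(x_{i_t}, x_{i_{t+1}}) = d_p for all 0 ≤ t ≤ 2mn − 2; (b) L_T(y_{j_0}) + L_T(y_{j_{2mn−1}}) = 0; and (c) for all 0 ≤ a < b ≤ 2mn − 1, d_T(y_{j_a}, y_{j_b}) + d_{P_{m,k}}(x_{i_a}, x_{i_b}) ≥ ∑_{t=a}^{b−1} (L_T(y_{j_t}) + L_T(y_{j_{t+1}}) − d_t − ε) + d_t + d_p + 1. -/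
/-!
Common definitions: radio labelings, weight centers, levels, branches,
generalized Petersen graphs, stars.
-/

open Finset

namespace RadioPaper

variable {V : Type*}

/-- The diameter of a finite graph: the maximum distance between two vertices. -/
noncomputable def graphDiam [Fintype V] (G : SimpleGraph V) : ℕ :=
  Finset.univ.sup fun p : V × V => G.dist p.1 p.2

/-- A radio labeling of `G`: `|f u - f v| ≥ diam G + 1 - d(u,v)` for distinct `u, v`. -/
def IsRadioLabeling [Fintype V] (G : SimpleGraph V) (f : V → ℕ) : Prop :=
  ∀ u v : V, u ≠ v → (graphDiam G : ℤ) + 1 - G.dist u v ≤ |(f u : ℤ) - (f v : ℤ)|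

/-- The span of a labeling: the maximum of `|f u - f v|` over all pairs of vertices. -/
noncomputable def radioSpan [Fintype V] (f : V → ℕ) : ℕ :=
  Finset.univ.sup fun p : V × V => f p.1 - f p.2

/-- The radio number of `G`: the minimum span over all radio labelings. -/
noncomputable def radioNumber [Fintype V] (G : SimpleGraph V) : ℕ :=
  sInf {s : ℕ | ∃ f : V → ℕ, IsRadioLabeling G f ∧ radioSpan f = s}

/-- The weight of a graph at a vertex `u`: the sum of distances from `u` to all vertices. -/
noncomputable def weight [Fintype V] (T : SimpleGraph V) (u : V) : ℕ :=
  ∑ v : V, T.dist u v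

/-- The set of weight centers: vertices minimizing the weight. -/
def weightCenters [Fintype V] (T : SimpleGraph V) : Set V :=
  {c | ∀ u : V, weight T c ≤ weight T u}

/-- The level of a vertex: its distance to a nearest weight center. -/
noncomputable def level [Fintype V] (T : SimpleGraph V) (x : V) : ℕ :=
  sInf {d : ℕ | ∃ w ∈ weightCenters T, T.dist x w = d}

/-- The total level of `T`: sum of the levels of all vertices. -/
noncomputable def totalLevel [Fintype V] (T : SimpleGraph V) : ℕ :=
  ∑ x : V, level T x

/-- `ε(T) = 1` if `T` has a unique weight center, and `0` otherwise (two centers). -/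
noncomputable def eps [Fintype V] (T : SimpleGraph V) : ℕ :=
  if (weightCenters T).ncard = 1 then 1 else 0

/-- `z` is an ancestor of `x` in the tree rooted at its weight center(s):
`z` lies on the path from some weight center to `x`. -/
def IsAncestor [Fintype V] (T : SimpleGraph V) (z x : V) : Prop :=
  ∃ w ∈ weightCenters T, T.dist w z + T.dist z x = T.dist w x

/-- `φ_T(x,y)`: the maximum level of a common ancestor of `x` and `y`. -/
noncomputable def phi [Fintype V] (T : SimpleGraph V) (x y : V) : ℕ :=
  sSup {l : ℕ | ∃ z : V, IsAncestor T z x ∧ IsAncestor T z y ∧ level T z = l}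

/-- `x` and `y` are in opposite branches: `T` has two weight centers `w, w'` and
`x, y` lie in different components of `T - ww'`. -/
def OppositeBranches [Fintype V] (T : SimpleGraph V) (x y : V) : Prop :=
  ∃ w w' : V, w ≠ w' ∧ weightCenters T = {w, w'} ∧
    ¬ (T.deleteEdges {s(w, w')}).Reachable x y

open Classical in
/-- `δ_T(x,y) = 1` if `T` has two weight centers and `x, y` are in opposite branches,
and `0` otherwise. -/
noncomputable def delta [Fintype V] (T : SimpleGraph V) (x y : V) : ℕ :=
  if (weightCenters T).ncard = 2 ∧ OppositeBranches T x y then 1 else 0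

/-- `x` and `y` are in different branches: some weight center lies on the `x`–`y` path
(equivalently, the paths from the center to `x` and to `y` depart through different
neighbours, or one of `x, y` is a weight center). -/
def DifferentBranches [Fintype V] (T : SimpleGraph V) (x y : V) : Prop :=
  ∃ w ∈ weightCenters T, T.dist x w + T.dist w y = T.dist x y

/-- `x` and `y` are in the same branch: both belong to the branch of `T` induced by some
non-central neighbour `u` of a weight center `w` together with all of `u`'s descendants. -/
def SameBranch [Fintype V] (T : SimpleGraph V) (x y : V) : Prop :=
  ∃ w ∈ weightCenters T, ∃ u : V, u ∉ weightCenters T ∧ T.Adj w u ∧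
    T.dist w x = 1 + T.dist u x ∧ T.dist w y = 1 + T.dist u y

/-- The generalized Petersen graph `P_{m,k}`: outer vertices `(false, i)` (the `u_i`) and
inner vertices `(true, i)` (the `v_i`), with edges `u_i u_{i+1}`, `u_i v_i`, `v_i v_{i+k}`. -/
def genPetersen (m k : ℕ) : SimpleGraph (Bool × ZMod m) :=
  SimpleGraph.fromRel fun a b =>
    (a.1 = false ∧ b.1 = false ∧ b.2 = a.2 + 1) ∨
    (a.1 = false ∧ b.1 = true ∧ a.2 = b.2) ∨
    (a.1 = true ∧ b.1 = true ∧ b.2 = a.2 + (k : ZMod m))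

/-- The star `K_{1,n}`: vertex `0` is the centre, joined to the `n` leaves. -/
def starGraph (n : ℕ) : SimpleGraph (Fin (n + 1)) :=
  SimpleGraph.fromRel fun a _ => a = 0


section TreeGeom

open SimpleGraph Walk

variable {T : SimpleGraph V}

lemma tree_path_length (hT : T.IsTree) {x y : V} {p : T.Walk x y} (hp : p.IsPath) :
    p.length = T.dist x y := by
  obtain ⟨q, hq, hql⟩ := hT.isConnected.exists_path_of_dist x y
  rw [(hT.existsUnique_path x y).unique hp hq, hql]

lemma tree_dist_split (hT : T.IsTree) {x y z : V} {p : T.Walk x y}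
    (hp : p.IsPath) (hz : z ∈ p.support) :
    T.dist x z + T.dist z y = T.dist x y := by
  classical
  rw [← tree_path_length hT (hp.takeUntil hz), ← tree_path_length hT (hp.dropUntil hz),
    ← tree_path_length hT hp]
  conv_rhs => rw [← Walk.take_spec p hz]
  rw [Walk.length_append]

lemma isPath_append_of_inter {x y z : V} {p : T.Walk x y} {q : T.Walk y z}
    (hp : p.IsPath) (hq : q.IsPath)
    (h : ∀ a ∈ p.support, a ∈ q.support → a = y) : (p.append q).IsPath := by
  rw [Walk.isPath_def, Walk.support_append, List.nodup_append]
  refine ⟨hp.support_nodup, ?_, ?_⟩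
  · have := hq.support_nodup
    rw [q.support_eq_cons] at this
    exact this.of_cons
  · intro a ha b ha' hab
    subst hab
    have hyq := hq.support_nodup
    rw [q.support_eq_cons] at hyq
    have : a ∈ q.support := by rw [q.support_eq_cons]; exact List.mem_cons_of_mem _ ha'
    have := h a ha this
    subst this
    exact (List.nodup_cons.mp hyq).1 ha'

lemma tree_adj_dist_trichotomy (hT : T.IsTree) {c u : V} (h : T.Adj c u) (v : V) :
    T.dist v u = T.dist v c + 1 ∨ T.dist v c = T.dist v u + 1 := by
  classical
  obtain ⟨p, hp, hl⟩ := hT.isConnected.exists_path_of_dist v c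
  by_cases hu : u ∈ p.support
  · right
    have hs := tree_dist_split hT hp hu
    have h1 : T.dist u c = 1 := SimpleGraph.dist_eq_one_iff_adj.mpr h.symm
    omega
  · left
    have hq : (p.append (Walk.cons h Walk.nil)).IsPath := by
      refine isPath_append_of_inter hp (by simp [Walk.isPath_def, h.ne]) ?_
      intro a ha ha'
      simp only [Walk.support_cons, Walk.support_nil, List.mem_cons,
        List.mem_singleton, List.not_mem_nil, or_false] at ha'
      rcases ha' with h1 | h1
      · exact h1
      · exact absurd (h1 ▸ ha) hu
    have := tree_path_length hT hq
    rw [Walk.length_append] at this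
    simp only [Walk.length_cons, Walk.length_nil] at this
    omega


-- crux: if `u` is the first step of the geodesic `c → c'` and the path from `v` to `u`
-- passes through `c`, then the path from `v` to `c'` passes through `c`.
lemma tree_dist_through (hT : T.IsTree) {c u c' v : V} (h : T.Adj c u)
    (hu : T.dist u c' + 1 = T.dist c c') (hv : T.dist v u = T.dist v c + 1) :
    T.dist v c' = T.dist v c + T.dist c c' := by
  classical
  obtain ⟨q, hq, hql⟩ := hT.isConnected.exists_path_of_dist u c'
  have hpq : (Walk.cons h q).IsPath := by
    apply Walk.isPath_of_length_eq_dist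
    simp only [Walk.length_cons, hql]
    omega
  obtain ⟨s, hs, hsl⟩ := hT.isConnected.exists_path_of_dist v c
  have hW : (s.append (Walk.cons h q)).IsPath := by
    refine isPath_append_of_inter hs hpq ?_
    intro z hzs hzp
    by_contra hzc
    simp only [Walk.support_cons, List.mem_cons] at hzp
    rcases hzp with rfl | hzq
    · exact hzc rfl
    · -- z on the geodesic beyond u
      have h1 : T.dist u z + T.dist z c' = T.dist u c' := tree_dist_split hT hq hzq
      have h2 : T.dist v z + T.dist z c = T.dist v c := tree_dist_split hT hs hzs
      have h3 : T.dist c z + T.dist z c' = T.dist c c' :=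
        tree_dist_split hT hpq (by simp [Walk.support_cons, hzq])
      -- hence dist z u = dist z c - 1
      have h4 : T.dist u z + 1 = T.dist c z := by omega
      have h5 : T.dist v u ≤ T.dist v z + T.dist z u :=
        hT.isConnected.dist_triangle
      have h6 : T.dist z u = T.dist u z := SimpleGraph.dist_comm (G := T)
      have h7 : T.dist c z = T.dist z c := SimpleGraph.dist_comm (G := T)
      omega
  have := tree_path_length hT hW
  rw [Walk.length_append] at this
  simp only [Walk.length_cons] at this
  omega

lemma tree_exists_first_step (hT : T.IsTree) {a b : V} (hab : a ≠ b) :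
    ∃ u, T.Adj a u ∧ T.dist u b + 1 = T.dist a b := by
  obtain ⟨p, hp, hl⟩ := hT.isConnected.exists_path_of_dist a b
  cases p with
  | nil => exact absurd rfl hab
  | cons h q =>
    refine ⟨_, h, ?_⟩
    rw [← tree_path_length hT hp.of_cons]
    simpa using hl

end TreeGeom


section Centers

open SimpleGraph

variable [Fintype V] {T : SimpleGraph V}

lemma weight_adj_diff (hT : T.IsTree) {c u : V} (h : T.Adj c u) :
    (weight T u : ℤ) - weight T c = (Fintype.card V : ℤ)
      - 2 * (Finset.univ.filter fun v => T.dist v c = T.dist v u + 1).card := by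
  classical
  have key : ∀ v : V, (T.dist u v : ℤ) - T.dist c v =
      if T.dist v c = T.dist v u + 1 then -1 else 1 := by
    intro v
    have := tree_adj_dist_trichotomy hT h v
    have h1 : T.dist u v = T.dist v u := SimpleGraph.dist_comm (G := T)
    have h2 : T.dist c v = T.dist v c := SimpleGraph.dist_comm (G := T)
    split_ifs with hif
    · rw [h1, h2, hif]; push_cast; ring
    · rcases this with h3 | h3
      · rw [h1, h2, h3]; push_cast; ring
      · exact absurd h3 hif
  have : (weight T u : ℤ) - weight T c
      = ∑ v : V, ((T.dist u v : ℤ) - T.dist c v) := by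
    unfold weight; push_cast; rw [Finset.sum_sub_distrib]
  rw [this, Finset.sum_congr rfl fun v _ => key v, Finset.sum_ite, Finset.sum_const,
    Finset.sum_const]
  simp only [nsmul_eq_mul, mul_one, mul_neg_one]
  have := Finset.card_filter_add_card_filter_not (s := Finset.univ)
    (p := fun v => T.dist v c = T.dist v u + 1)
  rw [Finset.card_univ] at this
  omega

lemma side_card_le (hT : T.IsTree) {c u : V} (hc : c ∈ weightCenters T) (h : T.Adj c u) :
    2 * (Finset.univ.filter fun v => T.dist v c = T.dist v u + 1).card
      ≤ Fintype.card V := by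
  have h1 := weight_adj_diff hT h
  have h2 : (weight T c : ℤ) ≤ weight T u := by exact_mod_cast hc u
  omega

lemma centers_adj (hT : T.IsTree) {c c' : V} (hc : c ∈ weightCenters T)
    (hc' : c' ∈ weightCenters T) (hne : c ≠ c') : T.Adj c c' := by
  classical
  by_contra hadj
  have hd1 : 0 < T.dist c c' := hT.isConnected.pos_dist_of_ne hne
  have hd2 : 2 ≤ T.dist c c' := by
    rcases Nat.lt_or_ge (T.dist c c') 2 with h1 | h1
    · have h2 : T.dist c c' = 1 := by omega
      exact absurd (SimpleGraph.dist_eq_one_iff_adj.mp h2) hadj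
    · exact h1
  obtain ⟨u, hu, hud⟩ := tree_exists_first_step hT hne
  obtain ⟨u', hu', hud'⟩ := tree_exists_first_step hT (Ne.symm hne)
  have hcd : T.dist c' c = T.dist c c' := SimpleGraph.dist_comm (G := T)
  have hdu1 : T.dist u c = 1 := SimpleGraph.dist_eq_one_iff_adj.mpr hu.symm
  have hdu1' : T.dist u' c' = 1 := SimpleGraph.dist_eq_one_iff_adj.mpr hu'.symm
  have hA2 := side_card_le hT hc hu
  have hA2' := side_card_le hT hc' hu'
  set A := Finset.univ.filter fun v => T.dist v c = T.dist v u + 1 with hA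
  set A' := Finset.univ.filter fun v => T.dist v c' = T.dist v u' + 1 with hA'
  -- u ∈ A
  have huA : u ∈ A := by
    simp only [hA, Finset.mem_filter, Finset.mem_univ, true_and]
    rw [SimpleGraph.dist_self, hdu1]
  -- u ∈ A'
  have huA' : u ∈ A' := by
    simp only [hA', Finset.mem_filter, Finset.mem_univ, true_and]
    rcases tree_adj_dist_trichotomy hT hu' u with h1 | h1
    · exfalso
      have hthr := tree_dist_through (c' := c) hT hu' (by omega) h1
      have h2 : T.dist u c = T.dist c u := SimpleGraph.dist_comm (G := T)
      omega
    · exact h1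
  -- complement of A is contained in A'
  have hsub : ∀ v : V, v ∉ A → v ∈ A' := by
    intro v hv
    simp only [hA, Finset.mem_filter, Finset.mem_univ, true_and] at hv
    have htri := tree_adj_dist_trichotomy hT hu v
    have hvu : T.dist v u = T.dist v c + 1 := by tauto
    have hthr := tree_dist_through (c' := c') hT hu hud hvu
    simp only [hA', Finset.mem_filter, Finset.mem_univ, true_and]
    rcases tree_adj_dist_trichotomy hT hu' v with h1 | h1
    · exfalso
      have htri2 : T.dist v u' ≤ T.dist v c + T.dist c u' :=
        hT.isConnected.dist_triangle
      have h2 : T.dist c u' = T.dist u' c := SimpleGraph.dist_comm (G := T)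
      omega
    · exact h1
  -- counting
  have hcount : Fintype.card V - A.card + 1 ≤ A'.card := by
    have hins : insert u (Finset.univ \ A) ⊆ A' := by
      intro v hv
      rcases Finset.mem_insert.mp hv with rfl | hv
      · exact huA'
      · exact hsub v (Finset.mem_sdiff.mp hv).2
    have hcard : (insert u (Finset.univ \ A)).card = Fintype.card V - A.card + 1 := by
      rw [Finset.card_insert_of_notMem (by simp [huA]), Finset.card_sdiff_of_subset
        (Finset.subset_univ A), Finset.card_univ]
    rw [← hcard]
    exact Finset.card_le_card hins
  have hAle : A.card ≤ Fintype.card V := (Finset.card_le_card (Finset.subset_univ A)).trans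
    (le_of_eq Finset.card_univ)
  omega

end Centers


section Levels

open SimpleGraph

variable [Fintype V] {T : SimpleGraph V}

lemma centers_nonempty (hT : T.IsTree) : (weightCenters T).Nonempty := by
  classical
  have hne : (Finset.univ : Finset V).Nonempty :=
    @Finset.univ_nonempty V _ hT.isConnected.nonempty
  obtain ⟨c, _, hc⟩ := Finset.exists_min_image Finset.univ (weight T) hne
  exact ⟨c, fun u => hc u (Finset.mem_univ u)⟩

lemma exists_center_level (hT : T.IsTree) (x : V) :
    ∃ w ∈ weightCenters T, T.dist x w = level T x := by
  have hne : {d : ℕ | ∃ w ∈ weightCenters T, T.dist x w = d}.Nonempty := by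
    obtain ⟨w, hw⟩ := centers_nonempty hT
    exact ⟨_, w, hw, rfl⟩
  exact Nat.sInf_mem hne

lemma level_le_dist {w : V} (hw : w ∈ weightCenters T) (x : V) :
    level T x ≤ T.dist x w :=
  Nat.sInf_le ⟨w, hw, rfl⟩

lemma dist_le_levels (hT : T.IsTree) (x y : V) :
    (T.dist x y : ℤ) ≤ level T x + level T y + 1 - eps T := by
  obtain ⟨w, hw, hwx⟩ := exists_center_level hT x
  obtain ⟨w', hw', hwy⟩ := exists_center_level hT y
  have t1 : T.dist x y ≤ T.dist x w + T.dist w y := hT.isConnected.dist_triangle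
  have t2 : T.dist w y ≤ T.dist w w' + T.dist w' y := hT.isConnected.dist_triangle
  have hc1 : T.dist w' y = T.dist y w' := SimpleGraph.dist_comm (G := T)
  by_cases hww : w = w'
  · subst hww
    have h0 : T.dist w w = 0 := SimpleGraph.dist_self (G := T)
    have he : eps T ≤ 1 := by unfold eps; split <;> omega
    omega
  · have hadj := centers_adj hT hw hw' hww
    have h1 : T.dist w w' = 1 := SimpleGraph.dist_eq_one_iff_adj.mpr hadj
    have heps : eps T = 0 := by
      unfold eps
      rw [if_neg]
      intro hcard
      obtain ⟨a, ha⟩ := Set.ncard_eq_one.mp hcard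
      rw [ha] at hw hw'
      exact hww (hw.trans hw'.symm)
    omega

end Levels


section BoxProd

open SimpleGraph

variable {α β : Type*} {G : SimpleGraph α} {H : SimpleGraph β}

lemma boxProd_dist_le_walk (hG : G.Connected) (hH : H.Connected)
    {x y : α × β} (w : (G □ H).Walk x y) :
    G.dist x.1 y.1 + H.dist x.2 y.2 ≤ w.length := by
  induction w with
  | nil => simp
  | @cons a b c h w ih =>
    rw [SimpleGraph.boxProd_adj] at h
    rw [Walk.length_cons]
    rcases h with ⟨h1, h2⟩ | ⟨h1, h2⟩
    · have t1 : G.dist a.1 c.1 ≤ G.dist a.1 b.1 + G.dist b.1 c.1 := hG.dist_triangle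
      have t2 : G.dist a.1 b.1 = 1 := SimpleGraph.dist_eq_one_iff_adj.mpr h1
      rw [h2]
      omega
    · have t1 : H.dist a.2 c.2 ≤ H.dist a.2 b.2 + H.dist b.2 c.2 := hH.dist_triangle
      have t2 : H.dist a.2 b.2 = 1 := SimpleGraph.dist_eq_one_iff_adj.mpr h1
      rw [h2]
      omega

lemma boxProd_dist (hG : G.Connected) (hH : H.Connected) (x y : α × β) :
    (G □ H).dist x y = G.dist x.1 y.1 + H.dist x.2 y.2 := by
  refine le_antisymm ?_ ?_
  · obtain ⟨w₁, hw₁⟩ := (hG x.1 y.1).exists_walk_length_eq_dist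
    obtain ⟨w₂, hw₂⟩ := (hH x.2 y.2).exists_walk_length_eq_dist
    have hle := SimpleGraph.dist_le ((((Walk.boxProdLeft H x.2 w₁).append
      (Walk.boxProdRight G y.1 w₂)).copy (by simp) (by simp)) : (G □ H).Walk x y)
    have e1 : (Walk.boxProdLeft H x.2 w₁).length = w₁.length := Walk.length_map _ _
    have e2 : (Walk.boxProdRight G y.1 w₂).length = w₂.length := Walk.length_map _ _
    rwa [Walk.length_copy, Walk.length_append, e1, e2, hw₁, hw₂] at hle
  · obtain ⟨w, hw⟩ := ((hG.boxProd hH) x y).exists_walk_length_eq_dist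
    rw [← hw]
    exact boxProd_dist_le_walk hG hH w

variable [Fintype α] [Fintype β]

lemma dist_le_graphDiam (G : SimpleGraph α) (u v : α) : G.dist u v ≤ graphDiam G :=
  Finset.le_sup (f := fun p : α × α => G.dist p.1 p.2) (Finset.mem_univ (u, v))

lemma exists_graphDiam [Nonempty α] (G : SimpleGraph α) :
    ∃ u v : α, G.dist u v = graphDiam G := by
  obtain ⟨p, _, hp⟩ := Finset.exists_mem_eq_sup (Finset.univ : Finset (α × α))
    Finset.univ_nonempty (fun p : α × α => G.dist p.1 p.2)
  exact ⟨p.1, p.2, hp.symm⟩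

lemma graphDiam_boxProd [Nonempty α] [Nonempty β] (hG : G.Connected) (hH : H.Connected) :
    graphDiam (G □ H) = graphDiam G + graphDiam H := by
  refine le_antisymm ?_ ?_
  · refine Finset.sup_le fun p _ => ?_
    rw [boxProd_dist hG hH]
    exact Nat.add_le_add (dist_le_graphDiam G _ _) (dist_le_graphDiam H _ _)
  · obtain ⟨a, a', ha⟩ := exists_graphDiam G
    obtain ⟨b, b', hb⟩ := exists_graphDiam H
    have := dist_le_graphDiam (G □ H) (a, b) (a', b')
    rwa [boxProd_dist hG hH, ha, hb] at this

end BoxProd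


section Petersen

open SimpleGraph

lemma genPetersen_connected (m k : ℕ) [NeZero m] (hm : 3 ≤ m) :
    (genPetersen m k).Connected := by
  haveI : Fact (1 < m) := ⟨by omega⟩
  rw [SimpleGraph.connected_iff]
  refine ⟨?_, inferInstance⟩
  have hone : (1 : ZMod m) ≠ 0 := one_ne_zero
  have houter : ∀ j : ℕ, (genPetersen m k).Reachable (false, (0 : ZMod m)) (false, (j : ZMod m)) := by
    intro j
    induction j with
    | zero =>
      rw [Nat.cast_zero]
    | succ j ih =>
      refine ih.trans (SimpleGraph.Adj.reachable ?_)
      rw [genPetersen, SimpleGraph.fromRel_adj]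
      constructor
      · intro hcon
        have := congrArg Prod.snd hcon
        simp only at this
        push_cast at this
        exact hone (left_eq_add.mp this)
      · left; left
        refine ⟨rfl, rfl, by push_cast; ring⟩
  have houter' : ∀ i : ZMod m, (genPetersen m k).Reachable (false, (0 : ZMod m)) (false, i) := by
    intro i
    have := houter i.val
    rwa [ZMod.natCast_val, ZMod.cast_id] at this
  have hall : ∀ a : Bool × ZMod m, (genPetersen m k).Reachable (false, (0 : ZMod m)) a := by
    rintro ⟨b, i⟩
    cases b
    · exact houter' i
    · refine (houter' i).trans (SimpleGraph.Adj.reachable ?_)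
      rw [genPetersen, SimpleGraph.fromRel_adj]
      exact ⟨by simp, by left; right; left; exact ⟨rfl, rfl, rfl⟩⟩
  intro a b
  exact (hall a).symm.trans (hall b)

lemma card_petersen (m : ℕ) [NeZero m] : Fintype.card (Bool × ZMod m) = 2 * m := by
  rw [Fintype.card_prod, Fintype.card_bool, ZMod.card]

end Petersen

section Radio

open SimpleGraph

variable [Fintype V]

lemma exists_optimal_labeling [Nonempty V] (G : SimpleGraph V) :
    ∃ f : V → ℕ, IsRadioLabeling G f ∧ radioSpan f = radioNumber G := by
  classical
  have hne : {s : ℕ | ∃ f : V → ℕ, IsRadioLabeling G f ∧ radioSpan f = s}.Nonempty := by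
    set f : V → ℕ := fun v => (graphDiam G + 1) * ((Fintype.equivFin V) v : ℕ) with hf
    refine ⟨radioSpan f, f, ?_, rfl⟩
    intro u v huv
    set iu := ((Fintype.equivFin V) u : ℕ) with hiu
    set iv := ((Fintype.equivFin V) v : ℕ) with hiv
    have hne' : iu ≠ iv := by
      intro hc
      exact huv ((Fintype.equivFin V).injective (Fin.ext hc))
    have h1 : (1 : ℤ) ≤ |(iu : ℤ) - iv| :=
      Int.one_le_abs (sub_ne_zero.mpr (by exact_mod_cast hne'))
    have h2 : (f u : ℤ) - f v = ((graphDiam G : ℤ) + 1) * ((iu : ℤ) - iv) := by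
      rw [hf]; push_cast; ring
    have h3 : (graphDiam G : ℤ) + 1 ≤ |(f u : ℤ) - f v| := by
      rw [h2, abs_mul, abs_of_nonneg (a := ((graphDiam G : ℤ) + 1)) (by positivity)]
      nlinarith [abs_nonneg ((iu : ℤ) - iv)]
    have h4 : (0 : ℤ) ≤ G.dist u v := by positivity
    omega
  exact Nat.sInf_mem hne

end Radio


lemma telescope_Ico (F : ℕ → ℤ) {a b : ℕ} (h : a ≤ b) :
    ∑ t ∈ Finset.Ico a b, (F (t + 1) - F t) = F b - F a := by
  induction b, h using Nat.le_induction with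
  | base => simp
  | succ b hab ih =>
    rw [Finset.sum_Ico_succ_top (by omega), ih]
    ring



/-- Necessity in Theorem 3.2: if `rn(P_{m,k} □ T) = (2mn - 1)(d_t + ε) - 4m·L(T)`, then
there is an ordering `z_0, …, z_{2mn-1}` of the vertices, `z_t = (x_{i_t}, y_{j_t})`, with
(a) `d_{P_{m,k}}(x_{i_t}, x_{i_{t+1}}) = d_p`; (b) `L_T(y_{j_0}) + L_T(y_{j_{2mn-1}}) = 0`;
and (c) for all `a < b`,
`d_T(y_{j_a}, y_{j_b}) + d_{P_{m,k}}(x_{i_a}, x_{i_b}) ≥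
  ∑_{t=a}^{b-1} (L_T(y_{j_t}) + L_T(y_{j_{t+1}}) - d_t - ε) + d_t + d_p + 1`. -/
theorem exists_ordering_with_sum_inequality_of_radioNumber_eq
    {Vt : Type*} [Fintype Vt] (m k n : ℕ) [NeZero m] (hm : 3 ≤ m) (hk : 1 ≤ k)
    (T : SimpleGraph Vt) (hT : T.IsTree) (hn : Fintype.card Vt = n)
    (h : (radioNumber ((genPetersen m k).boxProd T) : ℤ) =
      ((2 * m * n : ℤ) - 1) * ((graphDiam T : ℤ) + eps T) - 4 * m * totalLevel T) :
    ∃ o : ℕ → (Bool × ZMod m) × Vt,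
      (∀ v : (Bool × ZMod m) × Vt, ∃! t : ℕ, t < 2 * m * n ∧ o t = v) ∧
      (∀ t : ℕ, t + 1 < 2 * m * n →
        (genPetersen m k).dist (o t).1 (o (t + 1)).1 = graphDiam (genPetersen m k)) ∧
      level T (o 0).2 + level T (o (2 * m * n - 1)).2 = 0 ∧
      (∀ a b : ℕ, a < b → b < 2 * m * n →
        (∑ t ∈ Finset.Ico a b,
            ((level T (o t).2 : ℤ) + level T (o (t + 1)).2 - graphDiam T - eps T)) +
            graphDiam T + graphDiam (genPetersen m k) + 1 ≤
          (T.dist (o a).2 (o b).2 : ℤ) + (genPetersen m k).dist (o a).1 (o b).1) := by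
  classical
  have hGconn : (genPetersen m k).Connected := genPetersen_connected m k hm
  have hTconn : T.Connected := hT.isConnected
  haveI : Nonempty Vt := hTconn.nonempty
  have hPconn : ((genPetersen m k).boxProd T).Connected := hGconn.boxProd hTconn
  set G := genPetersen m k with hGdef
  set P := G.boxProd T with hPdef
  set N := 2 * m * n with hNdef
  have hcardV : Fintype.card ((Bool × ZMod m) × Vt) = N := by
    rw [Fintype.card_prod, card_petersen m, hn, hNdef, Nat.mul_assoc]
  have hn1 : 1 ≤ n := hn ▸ Fintype.card_pos
  have hN1 : 0 < N := by
    have : 0 < 2 * m := by omega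
    exact Nat.mul_pos this hn1
  -- the optimal labeling
  obtain ⟨f, hfradio, hfspan⟩ := exists_optimal_labeling P
  have hD : graphDiam P = graphDiam G + graphDiam T := graphDiam_boxProd hGconn hTconn
  have hdist : ∀ x y, P.dist x y = G.dist x.1 y.1 + T.dist x.2 y.2 :=
    boxProd_dist hGconn hTconn
  have hfinj : Function.Injective f := by
    intro u v huv
    by_contra hne
    have h1 := hfradio u v hne
    rw [huv, sub_self, abs_zero] at h1
    have h2 : P.dist u v ≤ graphDiam P := dist_le_graphDiam P u v
    have h3 : (P.dist u v : ℤ) ≤ graphDiam P := by exact_mod_cast h2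
    omega
  set s : Finset ℕ := Finset.univ.image f with hsdef
  have hscard : s.card = N := by
    rw [hsdef, Finset.card_image_of_injective _ hfinj, Finset.card_univ, hcardV]
  set e := s.orderIsoOfFin hscard with hedef
  have hfv' : ∀ t : Fin N, ∃ v : (Bool × ZMod m) × Vt, f v = (e t : ℕ) := by
    intro t
    obtain ⟨v, _, hv⟩ := Finset.mem_image.mp (show (e t : ℕ) ∈ Finset.univ.image f from (e t).2)
    exact ⟨v, hv⟩
  choose fv hfveq using hfv'
  have hmono : ∀ t t' : Fin N, t < t' → f (fv t) < f (fv t') := by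
    intro t t' hlt
    rw [hfveq, hfveq]
    exact_mod_cast (s.orderIsoOfFin hscard).lt_iff_lt.mpr hlt
  have hfvinj : Function.Injective fv := by
    intro t t' hteq
    have : f (fv t) = f (fv t') := by rw [hteq]
    rw [hfveq, hfveq] at this
    exact (s.orderIsoOfFin hscard).injective (Subtype.ext this)
  have hfvsurj : Function.Surjective fv := by
    intro v
    have hv : f v ∈ s := Finset.mem_image_of_mem f (Finset.mem_univ v)
    obtain ⟨t, ht⟩ := (s.orderIsoOfFin hscard).surjective ⟨f v, hv⟩
    refine ⟨t, hfinj ?_⟩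
    rw [hfveq]
    exact congrArg Subtype.val ht
  set o : ℕ → (Bool × ZMod m) × Vt :=
    fun t => if h : t < N then fv ⟨t, h⟩ else fv ⟨0, hN1⟩ with hodef
  have ho : ∀ (t : ℕ) (ht : t < N), o t = fv ⟨t, ht⟩ := fun t ht => dif_pos ht
  have hglt : ∀ a b : ℕ, a < b → b < N → f (o a) < f (o b) := by
    intro a b hab hb
    rw [ho a (lt_trans hab hb), ho b hb]
    exact hmono _ _ (Fin.mk_lt_mk.mpr hab)
  have honeq : ∀ a b : ℕ, a < b → b < N → o a ≠ o b := by
    intro a b hab hb hc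
    have := hglt a b hab hb
    rw [hc] at this
    omega
  have hpair : ∀ a b : ℕ, a < b → b < N →
      (graphDiam G : ℤ) + (graphDiam T : ℤ) + 1
        - (G.dist (o a).1 (o b).1 : ℤ) - (T.dist (o a).2 (o b).2 : ℤ)
        ≤ (f (o b) : ℤ) - f (o a) := by
    intro a b hab hb
    have h1 := hfradio (o a) (o b) (honeq a b hab hb)
    have h2 : |(f (o a) : ℤ) - f (o b)| = (f (o b) : ℤ) - f (o a) := by
      have hlt : (f (o a) : ℤ) < f (o b) := by exact_mod_cast hglt a b hab hb
      rw [abs_sub_comm, abs_of_pos (sub_pos.mpr hlt)]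
    rw [h2] at h1
    have h3 := hdist (o a) (o b)
    have h4 : (P.dist (o a) (o b) : ℤ) = G.dist (o a).1 (o b).1 + T.dist (o a).2 (o b).2 := by
      exact_mod_cast h3
    have h5 : (graphDiam P : ℤ) = graphDiam G + graphDiam T := by exact_mod_cast hD
    linarith
  have hlev : ∀ a b : ℕ, (T.dist (o a).2 (o b).2 : ℤ)
      ≤ level T (o a).2 + level T (o b).2 + 1 - eps T := fun a b => dist_le_levels hT _ _
  set M := N - 1 with hMdef
  have hNM : N = M + 1 := by omega
  have hslack : ∀ t, t < M →
      ((graphDiam T : ℤ) + eps T - level T (o t).2 - level T (o (t+1)).2)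
        + ((graphDiam G : ℤ) - G.dist (o t).1 (o (t+1)).1)
        ≤ (f (o (t+1)) : ℤ) - f (o t) := by
    intro t ht
    have h1 := hpair t (t+1) (by omega) (by omega)
    have h2 := hlev t (t+1)
    linarith
  have hdistG_le : ∀ t : ℕ, (G.dist (o t).1 (o (t+1)).1 : ℤ) ≤ graphDiam G := by
    intro t; exact_mod_cast dist_le_graphDiam G _ _
  have hrn : ((f (o M) : ℤ) - f (o 0)) ≤ radioNumber P := by
    have hle : f (o M) - f (o 0) ≤ radioSpan f :=
      Finset.le_sup (f := fun p : ((Bool × ZMod m) × Vt) × ((Bool × ZMod m) × Vt) =>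
        f p.1 - f p.2) (Finset.mem_univ (o M, o 0))
    rw [hfspan] at hle
    have hle2 : f (o 0) ≤ f (o M) := by
      by_cases hM0 : M = 0
      · rw [hM0]
      · exact le_of_lt (hglt 0 M (by omega) (by omega))
    omega
  have hlvsum : ∑ t ∈ Finset.range N, (level T (o t).2 : ℤ) = 2 * m * totalLevel T := by
    have h1 : ∑ t ∈ Finset.range N, (level T (o t).2 : ℤ)
        = ∑ t : Fin N, (level T (fv t).2 : ℤ) := by
      rw [← Fin.sum_univ_eq_sum_range (fun t => (level T (o t).2 : ℤ)) N]
      refine Finset.sum_congr rfl fun t _ => ?_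
      rw [ho t.val t.isLt]
    have h2 : ∑ t : Fin N, (level T (fv t).2 : ℤ)
        = ∑ v : (Bool × ZMod m) × Vt, (level T v.2 : ℤ) :=
      Fintype.sum_bijective fv ⟨hfvinj, hfvsurj⟩ _ _ (fun t => rfl)
    have h3 : ∑ v : (Bool × ZMod m) × Vt, (level T v.2 : ℤ)
        = (Fintype.card (Bool × ZMod m) : ℤ) * totalLevel T := by
      rw [Fintype.sum_prod_type]
      have hin : ∀ x : Bool × ZMod m,
          ∑ y : Vt, ((level T ((x, y) : (Bool × ZMod m) × Vt).2 : ℤ)) = (totalLevel T : ℤ) := by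
        intro x
        rw [totalLevel]
        push_cast
        rfl
      rw [Finset.sum_congr rfl (fun x _ => hin x), Finset.sum_const, Finset.card_univ,
        nsmul_eq_mul]
    rw [h1, h2, h3, card_petersen m]
    push_cast
    ring
  have hMcast : (M : ℤ) = 2 * m * n - 1 := by
    have h1 : (N : ℤ) = 2 * m * n := by rw [hNdef]; push_cast; ring
    omega
  have hIco0 : Finset.Ico 0 M = Finset.range M := by rw [Finset.range_eq_Ico]
  have hsum_gap : ∑ t ∈ Finset.range M, ((f (o (t+1)) : ℤ) - f (o t))
      = (f (o M) : ℤ) - f (o 0) := by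
    rw [← hIco0]
    exact telescope_Ico (fun t => (f (o t) : ℤ)) (Nat.zero_le M)
  have hsum_lv : ∑ t ∈ Finset.range M, ((level T (o t).2 : ℤ) + level T (o (t+1)).2)
      = 2 * (2 * m * totalLevel T) - level T (o 0).2 - level T (o M).2 := by
    rw [Finset.sum_add_distrib]
    have e1 : ∑ t ∈ Finset.range M, (level T (o t).2 : ℤ)
        = (∑ t ∈ Finset.range N, (level T (o t).2 : ℤ)) - level T (o M).2 := by
      rw [hNM, Finset.sum_range_succ]; ring
    have e2 : ∑ t ∈ Finset.range M, (level T (o (t+1)).2 : ℤ)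
        = (∑ t ∈ Finset.range N, (level T (o t).2 : ℤ)) - level T (o 0).2 := by
      rw [hNM, Finset.sum_range_succ']; ring
    rw [e1, e2, hlvsum]; ring
  have hSg : ∑ t ∈ Finset.range M, ((graphDiam T : ℤ) + eps T
        - level T (o t).2 - level T (o (t+1)).2)
      = M * ((graphDiam T : ℤ) + eps T)
        - (2 * (2 * m * totalLevel T) - level T (o 0).2 - level T (o M).2) := by
    have : ∀ t ∈ Finset.range M, (graphDiam T : ℤ) + eps T
        - level T (o t).2 - level T (o (t+1)).2
        = ((graphDiam T : ℤ) + eps T) - ((level T (o t).2 : ℤ) + level T (o (t+1)).2) := by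
      intro t _; ring
    rw [Finset.sum_congr rfl this, Finset.sum_sub_distrib, Finset.sum_const,
      Finset.card_range, hsum_lv, nsmul_eq_mul]
  have hkey : (∑ t ∈ Finset.range M, (((f (o (t+1)) : ℤ) - f (o t))
        - ((graphDiam T : ℤ) + eps T - level T (o t).2 - level T (o (t+1)).2)))
      + (level T (o 0).2 : ℤ) + level T (o M).2 ≤ 0 := by
    rw [Finset.sum_sub_distrib, hsum_gap, hSg]
    have hrneq : (radioNumber P : ℤ) =
        ((2 * m * n : ℤ) - 1) * ((graphDiam T : ℤ) + eps T) - 4 * m * totalLevel T := h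
    have : (M : ℤ) * ((graphDiam T : ℤ) + eps T) = ((2 * m * n : ℤ) - 1)
        * ((graphDiam T : ℤ) + eps T) := by rw [hMcast]
    linarith
  have hterm : ∀ t ∈ Finset.range M, (0 : ℤ) ≤ ((f (o (t+1)) : ℤ) - f (o t))
      - ((graphDiam T : ℤ) + eps T - level T (o t).2 - level T (o (t+1)).2) := by
    intro t ht
    rw [Finset.mem_range] at ht
    have h1 := hslack t ht
    have h2 := hdistG_le t
    linarith
  have hsum_nonneg := Finset.sum_nonneg hterm
  have hlv0 : (level T (o 0).2 : ℤ) = 0 := by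
    have := Int.ofNat_nonneg (level T (o 0).2)
    have := Int.ofNat_nonneg (level T (o M).2)
    omega
  have hlvM : (level T (o M).2 : ℤ) = 0 := by
    have := Int.ofNat_nonneg (level T (o 0).2)
    have := Int.ofNat_nonneg (level T (o M).2)
    omega
  have hsum_zero : ∑ t ∈ Finset.range M, (((f (o (t+1)) : ℤ) - f (o t))
        - ((graphDiam T : ℤ) + eps T - level T (o t).2 - level T (o (t+1)).2)) = 0 := by
    omega
  have hslack0 : ∀ t, t < M → ((f (o (t+1)) : ℤ) - f (o t))
      = (graphDiam T : ℤ) + eps T - level T (o t).2 - level T (o (t+1)).2 := by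
    intro t ht
    have := (Finset.sum_eq_zero_iff_of_nonneg hterm).mp hsum_zero t (Finset.mem_range.mpr ht)
    linarith
  have hdG : ∀ t, t < M → (G.dist (o t).1 (o (t+1)).1 : ℤ) = graphDiam G := by
    intro t ht
    have h1 := hslack t ht
    have h2 := hslack0 t ht
    have h3 := hdistG_le t
    have h4 := hlev t (t+1)
    linarith
  refine ⟨o, ?_, ?_, ?_, ?_⟩
  · -- bijectivity
    intro v
    obtain ⟨t0, rfl⟩ := hfvsurj v
    refine ⟨t0.val, ⟨t0.isLt, by rw [ho t0.val t0.isLt]⟩, ?_⟩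
    rintro t' ⟨ht', heq⟩
    rw [ho t' ht'] at heq
    have := hfvinj heq
    exact congrArg Fin.val this
  · -- consecutive distances equal the diameter
    intro t ht
    have := hdG t (by omega)
    exact_mod_cast this
  · -- levels of endpoints
    have h0 : level T (o 0).2 = 0 := by exact_mod_cast hlv0
    have hM' : level T (o M).2 = 0 := by exact_mod_cast hlvM
    rw [h0, hM']
  · -- the pair inequality
    intro a b hab hb
    have htel2 : ∑ t ∈ Finset.Ico a b, ((f (o (t+1)) : ℤ) - f (o t))
        = (f (o b) : ℤ) - f (o a) :=
      telescope_Ico (fun t => (f (o t) : ℤ)) (le_of_lt hab)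
    have hgapeq : ∀ t ∈ Finset.Ico a b, ((f (o (t+1)) : ℤ) - f (o t))
        = -(((level T (o t).2 : ℤ) + level T (o (t+1)).2 - graphDiam T - eps T)) := by
      intro t ht
      rw [Finset.mem_Ico] at ht
      have := hslack0 t (by omega)
      linarith
    have hsum2 : ∑ t ∈ Finset.Ico a b,
        ((level T (o t).2 : ℤ) + level T (o (t+1)).2 - graphDiam T - eps T)
        = -((f (o b) : ℤ) - f (o a)) := by
      rw [← htel2, Finset.sum_congr rfl hgapeq, ← Finset.sum_neg_distrib]
      simp
    have hp2 := hpair a b hab hb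
    rw [hsum2]
    linarith



end RadioPaper
end

section
/- Let P_{5,2} be the Petersen graph and K_{1,n} the star with n ≥ 3 leaves. Then there exists a radio labeling of P_{5,2} □ K_{1,n} with span 10n + 27; in particular, rn(P_{5,2} □ K_{1,n}) ≤ 10n + 27. -/
/-!
Common definitions: radio labelings, weight centers, levels, branches,
generalized Petersen graphs, stars.
-/

open Finset

namespace RadioPaper

variable {V : Type*}

/-! ### Auxiliary material for the construction -/

open SimpleGraph in
instance : DecidableRel (genPetersen 5 2).Adj := fun a b =>
  decidable_of_iff' _ (SimpleGraph.fromRel_adj _ a b)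

/-- Abbreviation for the vertex type of the Petersen graph. -/
abbrev PV := Bool × ZMod 5

/-- A cyclic ordering of the vertices of the Petersen graph in which consecutive
vertices and vertices three apart are non-adjacent. -/
def petA : Fin 10 → PV :=
  ![(false,0),(false,2),(false,4),(true,1),(true,0),(false,1),(false,3),(true,4),(true,3),(true,2)]

/-- The ordering as a function on `ℕ` (periodic mod 10). -/
def ord (m : ℕ) : PV := petA ⟨m % 10, Nat.mod_lt _ (by norm_num)⟩

/-- The index of a Petersen vertex in the ordering `petA`. -/
def idx (p : PV) : ℕ :=
  if p = (false,0) then 0 else if p = (false,2) then 1 else if p = (false,4) then 2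
  else if p = (true,1) then 3 else if p = (true,0) then 4 else if p = (false,1) then 5
  else if p = (false,3) then 6 else if p = (true,4) then 7 else if p = (true,3) then 8 else 9

lemma idx_lt (p : PV) : idx p < 10 := by revert p; decide
lemma ord_idx (p : PV) : ord (idx p) = p := by revert p; decide
lemma fact_step1 : ∀ m < 10, ¬ (genPetersen 5 2).Adj (ord m) (ord ((m+1) % 10)) ∧ ord m ≠ ord ((m+1) % 10) := by decide
lemma fact_step2 : ∀ m < 10, ord m ≠ ord ((m+2) % 10) := by decide
lemma fact_step3 : ∀ m < 10, ¬ (genPetersen 5 2).Adj (ord m) (ord ((m+3) % 10)) ∧ ord m ≠ ord ((m+3) % 10) := by decide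
lemma pet_two_step : ∀ p q : PV, p = q ∨ (genPetersen 5 2).Adj p q ∨ ∃ w, (genPetersen 5 2).Adj p w ∧ (genPetersen 5 2).Adj w q := by decide

open SimpleGraph

lemma pet_connected : (genPetersen 5 2).Connected := by
  rw [connected_iff]
  refine ⟨fun p q => ?_, ⟨(false,0)⟩⟩
  rcases pet_two_step p q with h | h | ⟨w, h1, h2⟩
  · exact h ▸ Reachable.refl p
  · exact h.reachable
  · exact h1.reachable.trans h2.reachable

lemma pet_dist_le_two (p q : PV) : (genPetersen 5 2).dist p q ≤ 2 := by
  rcases pet_two_step p q with h | h | ⟨w, h1, h2⟩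
  · simp [h, SimpleGraph.dist_self]
  · rw [SimpleGraph.dist_eq_one_iff_adj.mpr h]; norm_num
  · have : ((SimpleGraph.Walk.cons h1 (SimpleGraph.Walk.cons h2 SimpleGraph.Walk.nil)).length) = 2 := by
      simp
    exact this ▸ SimpleGraph.dist_le _

lemma star_adj_iff (n : ℕ) (a b : Fin (n+1)) :
    (starGraph n).Adj a b ↔ a ≠ b ∧ (a = 0 ∨ b = 0) := by
  constructor
  · rintro h; rcases (SimpleGraph.fromRel_adj _ a b).mp h with ⟨hne, h | h⟩
    · exact ⟨hne, Or.inl h⟩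
    · exact ⟨hne, Or.inr h⟩
  · rintro ⟨hne, h | h⟩
    · exact (SimpleGraph.fromRel_adj _ a b).mpr ⟨hne, Or.inl h⟩
    · exact (SimpleGraph.fromRel_adj _ a b).mpr ⟨hne, Or.inr h⟩

lemma star_connected (n : ℕ) : (starGraph n).Connected := by
  rw [connected_iff]
  refine ⟨fun p q => ?_, ⟨0⟩⟩
  by_cases hpq : p = q
  · exact hpq ▸ Reachable.refl p
  · by_cases hp : p = 0
    · exact ((star_adj_iff n p q).mpr ⟨hpq, Or.inl hp⟩).reachable
    · by_cases hq : q = 0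
      · exact ((star_adj_iff n p q).mpr ⟨hpq, Or.inr hq⟩).reachable
      · exact (((star_adj_iff n p 0).mpr ⟨hp, Or.inr rfl⟩).reachable).trans
          (((star_adj_iff n (0:Fin (n+1)) q).mpr ⟨fun h => hq h.symm, Or.inl rfl⟩).reachable)

lemma star_dist_le_two (n : ℕ) (p q : Fin (n+1)) : (starGraph n).dist p q ≤ 2 := by
  by_cases hpq : p = q
  · simp [hpq, SimpleGraph.dist_self]
  · by_cases hp : p = 0
    · rw [SimpleGraph.dist_eq_one_iff_adj.mpr ((star_adj_iff n p q).mpr ⟨hpq, Or.inl hp⟩)]; norm_num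
    · by_cases hq : q = 0
      · rw [SimpleGraph.dist_eq_one_iff_adj.mpr ((star_adj_iff n p q).mpr ⟨hpq, Or.inr hq⟩)]; norm_num
      · have h1 : (starGraph n).Adj p 0 := (star_adj_iff n p 0).mpr ⟨hp, Or.inr rfl⟩
        have h2 : (starGraph n).Adj 0 q := (star_adj_iff n (0:Fin (n+1)) q).mpr ⟨fun h => hq h.symm, Or.inl rfl⟩
        have : ((SimpleGraph.Walk.cons h1 (SimpleGraph.Walk.cons h2 SimpleGraph.Walk.nil)).length) = 2 := by simp
        exact this ▸ SimpleGraph.dist_le _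

lemma two_le_dist {W : Type*} {G : SimpleGraph W} (hG : G.Connected) {u v : W}
    (hne : u ≠ v) (hadj : ¬ G.Adj u v) : 2 ≤ G.dist u v := by
  have h0 := hG.pos_dist_of_ne hne
  have h1 : G.dist u v ≠ 1 := fun h => hadj (SimpleGraph.dist_eq_one_iff_adj.mp h)
  omega

lemma star_two_le {n : ℕ} {a b : Fin (n+1)} (ha : a ≠ 0) (hb : b ≠ 0) (hab : a ≠ b) :
    2 ≤ (starGraph n).dist a b :=
  two_le_dist (star_connected n) hab (fun h => by
    rcases (star_adj_iff n a b).mp h with ⟨_, h0 | h0⟩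
    exacts [ha h0, hb h0])

lemma boxProd_walk_le {α β : Type*} {G : SimpleGraph α} {H : SimpleGraph β}
    (hG : G.Connected) (hH : H.Connected) :
    ∀ {x y : α × β} (w : (G □ H).Walk x y), G.dist x.1 y.1 + H.dist x.2 y.2 ≤ w.length := by
  intro x y w
  induction w with
  | nil => simp
  | @cons a b c h p ih =>
    rcases SimpleGraph.boxProd_adj.mp h with ⟨ha, he⟩ | ⟨ha, he⟩
    · have t1 : G.dist a.1 c.1 ≤ 1 + G.dist b.1 c.1 := by
        have := hG.dist_triangle (v := b.1) (u := a.1) (w := c.1)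
        rwa [SimpleGraph.dist_eq_one_iff_adj.mpr ha] at this
      have t2 : H.dist a.2 c.2 = H.dist b.2 c.2 := by rw [he]
      simp only [SimpleGraph.Walk.length_cons]
      omega
    · have t1 : H.dist a.2 c.2 ≤ 1 + H.dist b.2 c.2 := by
        have := hH.dist_triangle (v := b.2) (u := a.2) (w := c.2)
        rwa [SimpleGraph.dist_eq_one_iff_adj.mpr ha] at this
      have t2 : G.dist a.1 c.1 = G.dist b.1 c.1 := by rw [he]
      simp only [SimpleGraph.Walk.length_cons]
      omega

lemma le_boxProd_dist {α β : Type*} {G : SimpleGraph α} {H : SimpleGraph β}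
    (hG : G.Connected) (hH : H.Connected) (x y : α × β) :
    G.dist x.1 y.1 + H.dist x.2 y.2 ≤ (G □ H).dist x y := by
  obtain ⟨w, hw⟩ := (hG.boxProd hH).exists_walk_length_eq_dist x y
  rw [← hw]
  exact boxProd_walk_le hG hH w

lemma boxProd_dist_le {α β : Type*} {G : SimpleGraph α} {H : SimpleGraph β}
    (hG : G.Connected) (hH : H.Connected) (x y : α × β) :
    (G □ H).dist x y ≤ G.dist x.1 y.1 + H.dist x.2 y.2 := by
  obtain ⟨w1, hw1⟩ := hG.exists_walk_length_eq_dist x.1 y.1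
  obtain ⟨w2, hw2⟩ := hH.exists_walk_length_eq_dist x.2 y.2
  have hw : (((w1.boxProdLeft H x.2).append (w2.boxProdRight G y.1)).length)
      = G.dist x.1 y.1 + H.dist x.2 y.2 := by
    rw [SimpleGraph.Walk.length_append]
    simp [SimpleGraph.Walk.boxProdLeft, SimpleGraph.Walk.boxProdRight, hw1, hw2]
    exact congrArg₂ (· + ·) ((SimpleGraph.Walk.length_map _ _).trans hw1) ((SimpleGraph.Walk.length_map _ _).trans hw2)
  calc (G □ H).dist x y ≤ _ := SimpleGraph.dist_le _
  _ = _ := hw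

/-- The leaf-shift parameter of the labeling. -/
def dd (n : ℕ) : ℕ := if n = 4 ∨ n = 7 ∨ n = 8 then 3 else 1

/-- The leaf index (minus one) of the `t`-th leaf vertex in the enumeration. -/
def leafval (n t : ℕ) : ℕ := (t / 10 + dd n * (t % 10)) % n

/-- The "round" of a leaf vertex. -/
def qv (n : ℕ) (v : PV × Fin (n+1)) : ℕ :=
  ((v.2.val - 1) + n - (dd n * idx v.1) % n) % n

/-- The position of a leaf vertex in the enumeration of the `10 n` leaf vertices. -/
def tv (n : ℕ) (v : PV × Fin (n+1)) : ℕ := 10 * qv n v + idx v.1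

/-- The radio labeling. -/
def lab (n : ℕ) (v : PV × Fin (n+1)) : ℕ :=
  if v.2 = 0 then (if idx v.1 < 5 then 10*n + 15 + 3 * idx v.1 else 3 * (idx v.1 - 5))
  else 14 + tv n v

lemma tv_lt {n : ℕ} (hn : 0 < n) (v : PV × Fin (n+1)) : tv n v < 10 * n := by
  have h1 : qv n v < n := Nat.mod_lt _ hn
  have h2 := idx_lt v.1
  unfold tv; omega

lemma leafval_tv {n : ℕ} (hn : 0 < n) (v : PV × Fin (n+1)) :
    leafval n (tv n v) = v.2.val - 1 := by
  have hi := idx_lt v.1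
  have hq : qv n v < n := Nat.mod_lt _ hn
  have hdiv : tv n v / 10 = qv n v := by unfold tv; omega
  have hmod : tv n v % 10 = idx v.1 := by unfold tv; omega
  have hval : v.2.val - 1 < n := by have := v.2.isLt; omega
  unfold leafval
  rw [hdiv, hmod]
  set a := v.2.val - 1
  set m := dd n * idx v.1 with hm
  have e1 : (qv n v + m) ≡ ((a + n - m % n) + m) [MOD n] :=
    Nat.ModEq.add_right m (Nat.mod_modEq _ n)
  have e2 : ((a + n - m % n) + m) ≡ ((a + n - m % n) + m % n) [MOD n] :=
    Nat.ModEq.add_left _ (Nat.mod_modEq m n).symm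
  have hr : m % n < n := Nat.mod_lt _ hn
  have e3 : (a + n - m % n) + m % n = a + n := by omega
  have e4 : a + n ≡ a [MOD n] := by
    have : (a + n) % n = a % n := by simp [Nat.add_mod_right]
    exact this
  have efin : (qv n v + m) ≡ a [MOD n] := by
    refine (e1.trans e2).trans ?_
    rw [e3]
    exact e4
  have : (qv n v + m) % n = a % n := efin
  rw [Nat.mod_eq_of_lt hval] at this
  exact this

lemma mod_shift_ne {n k x : ℕ} (h : ¬ n ∣ k) : (x + k) % n ≠ x % n := by
  intro he
  apply h
  have hm : Nat.ModEq n x (x + k) := he.symm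
  have h2 := (Nat.modEq_iff_dvd' (Nat.le_add_right x k)).mp hm
  simpa using h2

lemma dd_cases (n : ℕ) :
    (dd n = 3 ∧ (n = 4 ∨ n = 7 ∨ n = 8)) ∨ (dd n = 1 ∧ ¬(n = 4 ∨ n = 7 ∨ n = 8)) := by
  unfold dd; split
  · exact Or.inl ⟨rfl, by assumption⟩
  · exact Or.inr ⟨rfl, by assumption⟩

lemma not_dvd_small {n k : ℕ} (hn : 3 ≤ n) (hk : 0 < k) (hkn : k < n) : ¬ n ∣ k :=
  fun h => absurd (Nat.le_of_dvd hk h) (by omega)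

lemma not_dvd78 {n k : ℕ} (hn : 3 ≤ n) (hc : ¬(n = 4 ∨ n = 7 ∨ n = 8))
    (hk : k = 7 ∨ k = 8) : ¬ n ∣ k := by
  intro hdvd
  have hle : n ≤ k := Nat.le_of_dvd (by omega) hdvd
  rcases hk with h | h <;> subst h <;> interval_cases n <;> omega

lemma leafval_succ_ne {n : ℕ} (hn : 3 ≤ n) (t : ℕ) : leafval n (t+1) ≠ leafval n t := by
  unfold leafval
  rcases dd_cases n with ⟨hd, hc⟩ | ⟨hd, hc⟩ <;> rw [hd] <;> by_cases h9 : t % 10 = 9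
  · have e1 : (t+1)/10 + 3 * ((t+1)%10) = t/10 + 1 := by omega
    have e2 : t/10 + 3 * (t % 10) = (t/10 + 1) + 26 := by omega
    rw [e1, e2]
    exact (mod_shift_ne (by rcases hc with h|h|h <;> subst h <;> omega)).symm
  · have e1 : (t+1)/10 + 3 * ((t+1)%10) = (t/10 + 3 * (t % 10)) + 3 := by omega
    rw [e1]
    exact mod_shift_ne (by rcases hc with h|h|h <;> subst h <;> omega)
  · have e1 : (t+1)/10 + 1 * ((t+1)%10) = t/10 + 1 := by omega
    have e2 : t/10 + 1 * (t % 10) = (t/10 + 1) + 8 := by omega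
    rw [e1, e2]
    exact (mod_shift_ne (not_dvd78 hn hc (Or.inr rfl))).symm
  · have e1 : (t+1)/10 + 1 * ((t+1)%10) = (t/10 + 1 * (t % 10)) + 1 := by omega
    rw [e1]
    exact mod_shift_ne (not_dvd_small hn (by omega) (by omega))

lemma leafval_two_ne {n : ℕ} (hn : 3 ≤ n) (t : ℕ) : leafval n (t+2) ≠ leafval n t := by
  unfold leafval
  rcases dd_cases n with ⟨hd, hc⟩ | ⟨hd, hc⟩ <;> rw [hd] <;> by_cases h8 : t % 10 ≤ 7
  · have e1 : (t+2)/10 + 3 * ((t+2)%10) = (t/10 + 3 * (t % 10)) + 6 := by omega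
    rw [e1]
    exact mod_shift_ne (by rcases hc with h|h|h <;> subst h <;> omega)
  · have e1 : t/10 + 3 * (t % 10) = ((t+2)/10 + 3 * ((t+2)%10)) + 23 := by omega
    rw [e1]
    exact (mod_shift_ne (by rcases hc with h|h|h <;> subst h <;> omega)).symm
  · have e1 : (t+2)/10 + 1 * ((t+2)%10) = (t/10 + 1 * (t % 10)) + 2 := by omega
    rw [e1]
    exact mod_shift_ne (not_dvd_small hn (by omega) (by omega))
  · have e1 : t/10 + 1 * (t % 10) = ((t+2)/10 + 1 * ((t+2)%10)) + 7 := by omega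
    rw [e1]
    exact (mod_shift_ne (not_dvd78 hn hc (Or.inl rfl))).symm

lemma key {n : ℕ} (hn : 3 ≤ n) (u v : PV × Fin (n+1)) (hne : u ≠ v)
    (hle : lab n u ≤ lab n v) :
    5 ≤ ((genPetersen 5 2).boxProd (starGraph n)).dist u v + (lab n v - lab n u) := by
  have hn0 : 0 < n := by omega
  have hconn : ((genPetersen 5 2).boxProd (starGraph n)).Connected :=
    pet_connected.boxProd (star_connected n)
  have hiu := idx_lt u.1
  have hiv := idx_lt v.1
  set D := ((genPetersen 5 2).boxProd (starGraph n)).dist u v with hD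
  have hsum : (genPetersen 5 2).dist u.1 v.1 + (starGraph n).dist u.2 v.2 ≤ D :=
    le_boxProd_dist pet_connected (star_connected n) u v
  set DP := (genPetersen 5 2).dist u.1 v.1 with hDP
  set DS := (starGraph n).dist u.2 v.2 with hDS
  have hpos : 0 < D := hconn.pos_dist_of_ne hne
  by_cases hu2 : u.2 = 0 <;> by_cases hv2 : v.2 = 0
  · -- center-center
    have hfu : lab n u = if idx u.1 < 5 then 10*n + 15 + 3 * idx u.1 else 3 * (idx u.1 - 5) := by
      rw [lab, if_pos hu2]
    have hfv : lab n v = if idx v.1 < 5 then 10*n + 15 + 3 * idx v.1 else 3 * (idx v.1 - 5) := by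
      rw [lab, if_pos hv2]
    have hne1 : u.1 ≠ v.1 := by
      intro h
      exact hne (by rw [Prod.ext_iff]; exact ⟨h, hu2.trans hv2.symm⟩)
    have hine : idx u.1 ≠ idx v.1 := by
      intro h
      apply hne1
      rw [← ord_idx u.1, ← ord_idx v.1, h]
    by_cases hsucc : idx v.1 = idx u.1 + 1
    · have hf := fact_step1 (idx u.1) (by omega)
      rw [Nat.mod_eq_of_lt (by omega), ← hsucc, ord_idx, ord_idx] at hf
      have hP : 2 ≤ DP := two_le_dist pet_connected hf.2 hf.1
      by_cases h5u : idx u.1 < 5 <;> by_cases h5v : idx v.1 < 5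
      · rw [if_pos h5u] at hfu; rw [if_pos h5v] at hfv; omega
      · rw [if_pos h5u] at hfu; rw [if_neg h5v] at hfv; omega
      · rw [if_neg h5u] at hfu; rw [if_pos h5v] at hfv; omega
      · rw [if_neg h5u] at hfu; rw [if_neg h5v] at hfv; omega
    · -- gap at least 6 (or contradiction / huge gap)
      by_cases h5u : idx u.1 < 5 <;> by_cases h5v : idx v.1 < 5
      · rw [if_pos h5u] at hfu; rw [if_pos h5v] at hfv; omega
      · rw [if_pos h5u] at hfu; rw [if_neg h5v] at hfv; omega
      · rw [if_neg h5u] at hfu; rw [if_pos h5v] at hfv; omega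
      · rw [if_neg h5u] at hfu; rw [if_neg h5v] at hfv; omega
  · -- center-leaf
    have hfv : lab n v = 14 + tv n v := by rw [lab, if_neg hv2]
    have htv := tv_lt hn0 v
    have hfu : lab n u = if idx u.1 < 5 then 10*n + 15 + 3 * idx u.1 else 3 * (idx u.1 - 5) := by
      rw [lab, if_pos hu2]
    by_cases h5u : idx u.1 < 5
    · rw [if_pos h5u] at hfu; omega
    · rw [if_neg h5u] at hfu
      by_cases hsp : idx u.1 = 9 ∧ tv n v ≤ 1
      · obtain ⟨h9, ht1⟩ := hsp
        have hmv : tv n v % 10 = idx v.1 := by have := idx_lt v.1; unfold tv; omega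
        have hS : 1 ≤ DS := by
          refine (star_connected n).pos_dist_of_ne ?_
          rw [hu2]; exact fun h => hv2 h.symm
        rcases Nat.lt_or_ge (tv n v) 1 with ht0 | ht1'
        · -- tv = 0 : gap 2, need DP ≥ 2
          have ht0' : tv n v = 0 := by omega
          have hv0 : idx v.1 = 0 := by omega
          have hf := fact_step1 9 (by norm_num)
          have hu1 : u.1 = ord 9 := by rw [← h9, ord_idx]
          have hv1 : v.1 = ord ((9+1) % 10) := by
            rw [show (9+1) % 10 = 0 from rfl, ← hv0, ord_idx]
          have hP : 2 ≤ DP := by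
            rw [hDP, hu1, hv1]
            exact two_le_dist pet_connected hf.2 hf.1
          omega
        · -- tv = 1 : gap 3, need DP ≥ 1
          have ht1'' : tv n v = 1 := by omega
          have hv0 : idx v.1 = 1 := by omega
          have hne2 : u.1 ≠ v.1 := by
            have hf := fact_step2 9 (by norm_num)
            rw [show (9+2) % 10 = 1 from rfl] at hf
            rw [← ord_idx u.1, ← ord_idx v.1, h9, hv0]
            exact hf
          have hP : 1 ≤ DP := pet_connected.pos_dist_of_ne hne2
          omega
      · -- gap ≥ 4
        omega
  · -- leaf-center
    have hfu : lab n u = 14 + tv n u := by rw [lab, if_neg hu2]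
    have htu := tv_lt hn0 u
    have hfv : lab n v = if idx v.1 < 5 then 10*n + 15 + 3 * idx v.1 else 3 * (idx v.1 - 5) := by
      rw [lab, if_pos hv2]
    by_cases h5v : idx v.1 < 5
    · rw [if_pos h5v] at hfv
      by_cases hsp : idx v.1 = 0 ∧ 10*n - 2 ≤ tv n u
      · obtain ⟨h0, ht⟩ := hsp
        have hmu : tv n u % 10 = idx u.1 := by have := idx_lt u.1; unfold tv; omega
        have hS : 1 ≤ DS := by
          refine (star_connected n).pos_dist_of_ne ?_
          rw [hv2]; exact hu2
        rcases Nat.lt_or_ge (tv n u) (10*n - 1) with ht8 | ht9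
        · -- tv u = 10n-2 : gap 3, need DP ≥ 1
          have ht'' : tv n u = 10*n - 2 := by omega
          have hu8 : idx u.1 = 8 := by omega
          have hne2 : u.1 ≠ v.1 := by
            have hf := fact_step2 8 (by norm_num)
            rw [show (8+2) % 10 = 0 from rfl] at hf
            rw [← ord_idx u.1, ← ord_idx v.1, hu8, h0]
            exact hf
          have hP : 1 ≤ DP := pet_connected.pos_dist_of_ne hne2
          omega
        · -- tv u = 10n-1 : gap 2, need DP ≥ 2
          have ht'' : tv n u = 10*n - 1 := by omega
          have hu9 : idx u.1 = 9 := by omega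
          have hf := fact_step1 9 (by norm_num)
          have hu1 : u.1 = ord 9 := by rw [← hu9, ord_idx]
          have hv1 : v.1 = ord ((9+1) % 10) := by
            rw [show (9+1) % 10 = 0 from rfl, ← h0, ord_idx]
          have hP : 2 ≤ DP := by
            rw [hDP, hu1, hv1]
            exact two_le_dist pet_connected hf.2 hf.1
          omega
      · omega
    · rw [if_neg h5v] at hfv; omega
  · -- leaf-leaf
    have hfu : lab n u = 14 + tv n u := by rw [lab, if_neg hu2]
    have hfv : lab n v = 14 + tv n v := by rw [lab, if_neg hv2]
    have hmu : tv n u % 10 = idx u.1 := by unfold tv; omega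
    have hmv : tv n v % 10 = idx v.1 := by unfold tv; omega
    have hju := leafval_tv hn0 u
    have hjv := leafval_tv hn0 v
    have hvalu : u.2.val ≠ 0 := by
      intro h; exact hu2 (Fin.ext (by simpa using h))
    have hvalv : v.2.val ≠ 0 := by
      intro h; exact hv2 (Fin.ext (by simpa using h))
    have hu1 : u.1 = ord (tv n u % 10) := by rw [hmu, ord_idx]
    have hv1 : v.1 = ord (tv n v % 10) := by rw [hmv, ord_idx]
    have htle : tv n u ≤ tv n v := by omega
    have hcases : tv n v = tv n u ∨ tv n v = tv n u + 1 ∨ tv n v = tv n u + 2 ∨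
        tv n v = tv n u + 3 ∨ tv n u + 4 ≤ tv n v := by omega
    rcases hcases with ht | ht | ht | ht | ht
    · -- equal: contradiction with u ≠ v
      exfalso
      apply hne
      have h1 : u.1 = v.1 := by rw [hu1, hv1, ht]
      have h2 : u.2 = v.2 := by
        apply Fin.ext
        have : u.2.val - 1 = v.2.val - 1 := by rw [← hju, ← hjv, ht]
        omega
      rw [Prod.ext_iff]; exact ⟨h1, h2⟩
    · -- gap 1 : need D ≥ 4
      have him : tv n v % 10 = (tv n u % 10 + 1) % 10 := by omega
      have hf := fact_step1 (tv n u % 10) (by omega)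
      rw [← him, ← hu1, ← hv1] at hf
      have hP : 2 ≤ DP := two_le_dist pet_connected hf.2 hf.1
      have hne2 : u.2 ≠ v.2 := by
        intro h
        have : leafval n (tv n u + 1) = leafval n (tv n u) := by
          rw [← ht, hju, hjv, h]
        exact leafval_succ_ne hn (tv n u) this
      have hS : 2 ≤ DS := star_two_le hu2 hv2 hne2
      omega
    · -- gap 2 : need D ≥ 3
      have him : tv n v % 10 = (tv n u % 10 + 2) % 10 := by omega
      have hf := fact_step2 (tv n u % 10) (by omega)
      rw [← him, ← hu1, ← hv1] at hf
      have hP : 1 ≤ DP := pet_connected.pos_dist_of_ne hf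
      have hne2 : u.2 ≠ v.2 := by
        intro h
        have : leafval n (tv n u + 2) = leafval n (tv n u) := by
          rw [← ht, hju, hjv, h]
        exact leafval_two_ne hn (tv n u) this
      have hS : 2 ≤ DS := star_two_le hu2 hv2 hne2
      omega
    · -- gap 3 : need D ≥ 2
      by_cases hj : u.2 = v.2
      · have him : tv n v % 10 = (tv n u % 10 + 3) % 10 := by omega
        have hf := fact_step3 (tv n u % 10) (by omega)
        rw [← him, ← hu1, ← hv1] at hf
        have hP : 2 ≤ DP := two_le_dist pet_connected hf.2 hf.1
        have hS0 : 0 ≤ DS := Nat.zero_le _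
        omega
      · have hS : 2 ≤ DS := star_two_le hu2 hv2 hj
        omega
    · -- gap ≥ 4
      omega

/-- There is a radio labeling of `P_{5,2} □ K_{1,n}` (`n ≥ 3`) of span `10n + 27`;
in particular `rn(P_{5,2} □ K_{1,n}) ≤ 10n + 27`. -/
theorem radioNumber_petersen_boxProd_star_upper_bound (n : ℕ) (hn : 3 ≤ n) :
    (∃ f : (Bool × ZMod 5) × Fin (n + 1) → ℕ,
      IsRadioLabeling ((genPetersen 5 2).boxProd (starGraph n)) f ∧
        radioSpan f = 10 * n + 27) ∧
    radioNumber ((genPetersen 5 2).boxProd (starGraph n)) ≤ 10 * n + 27 := by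
  have hn0 : 0 < n := by omega
  have hconn : ((genPetersen 5 2).boxProd (starGraph n)).Connected :=
    pet_connected.boxProd (star_connected n)
  have hdiam : graphDiam ((genPetersen 5 2).boxProd (starGraph n)) ≤ 4 := by
    apply Finset.sup_le
    intro p _
    have h1 := boxProd_dist_le pet_connected (star_connected n) p.1 p.2
    have h2 := pet_dist_le_two p.1.1 p.2.1
    have h3 := star_dist_le_two n p.1.2 p.2.2
    omega
  have hlab_le : ∀ v, lab n v ≤ 10*n + 27 := by
    intro v
    have hi := idx_lt v.1
    have := tv_lt hn0 v
    unfold lab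
    split
    · split <;> omega
    · omega
  have hmax : lab n ((true, (0:ZMod 5)), (0 : Fin (n+1))) = 10*n + 27 := by
    have h4 : idx (true, (0:ZMod 5)) = 4 := by decide
    rw [lab]
    norm_num [h4]
  have hmin : lab n ((false, (1:ZMod 5)), (0 : Fin (n+1))) = 0 := by
    have h5 : idx (false, (1:ZMod 5)) = 5 := by decide
    rw [lab]
    norm_num [h5]
  have hrad : IsRadioLabeling ((genPetersen 5 2).boxProd (starGraph n)) (lab n) := by
    intro u v huv
    have hdist4 : (graphDiam ((genPetersen 5 2).boxProd (starGraph n)) : ℤ) ≤ 4 := by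
      exact_mod_cast hdiam
    rcases le_total (lab n u) (lab n v) with h | h
    · have hk := key hn u v huv h
      have h1 : ((lab n v : ℤ) - lab n u) ≤ |(lab n u : ℤ) - lab n v| := by
        rw [abs_sub_comm]; exact le_abs_self _
      have h2 : (5:ℤ) ≤ (((genPetersen 5 2).boxProd (starGraph n)).dist u v : ℤ)
          + ((lab n v : ℤ) - lab n u) := by
        zify [h] at hk
        linarith
      linarith
    · have hk := key hn v u huv.symm h
      rw [SimpleGraph.dist_comm] at hk
      have h1 : ((lab n u : ℤ) - lab n v) ≤ |(lab n u : ℤ) - lab n v| := le_abs_self _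
      have h2 : (5:ℤ) ≤ (((genPetersen 5 2).boxProd (starGraph n)).dist u v : ℤ)
          + ((lab n u : ℤ) - lab n v) := by
        zify [h] at hk
        linarith
      linarith
  have hspan : radioSpan (lab n) = 10*n + 27 := by
    apply le_antisymm
    · apply Finset.sup_le
      intro p _
      have := hlab_le p.1
      omega
    · have hmem := Finset.le_sup
        (f := fun p : ((Bool × ZMod 5) × Fin (n+1)) × ((Bool × ZMod 5) × Fin (n+1)) =>
          lab n p.1 - lab n p.2)
        (Finset.mem_univ (((true,(0:ZMod 5)), (0:Fin (n+1))), ((false,(1:ZMod 5)), (0:Fin (n+1)))))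
      simp only [hmax, hmin, Nat.sub_zero] at hmem
      exact hmem
  exact ⟨⟨lab n, hrad, hspan⟩, Nat.sInf_le ⟨lab n, hrad, hspan⟩⟩

end RadioPaper
end
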